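/- arXiv:2509.08559 — 6 statements merged into one kernel-verified Lean document; each statement's English description precedes it below -/
import Mathlib

section
/- Let η₁,…,η_n and Φ be non-negative random variables on a probability space such that Φ ≥ ∑_{i=1}^n η_i. Suppose there exist constants a ∈ (0,1) and b > 0 such that for every t > 0 and every 1 ≤ i ≤ n, the conditional probability P(η_i ≤ t | σ(η₁,…,η_{i-1})) ≤ a + b t almost surely. Then for every t > 0, log P(Φ ≤ t) ≤ 2·√(b n t / a) − n·log(1/a). -/
/-!
By the Chernoff bound, `P(∑ ηᵢ ≤ t) ≤ e^{Lt} E[∏ e^{-L ηᵢ}]` for every `L > 0`. Conditioning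
successively on `σ(η₁, …, η_{i-1})` bounds this expectation by the product of the conditional
Laplace transforms, and each of these is at most `a + b / L` by the layer-cake formula
`E[e^{-Lη} | F] = ∫₀¹ P(η ≤ -log u / L | F) du ≤ ∫₀¹ (a - (b / L) log u) du = a + b / L`.
Hence `P(Φ ≤ t) ≤ e^{Lt} (a + b / L)ⁿ ≤ aⁿ exp (L t + n b / (a L))`, and `L = √(bnt/a) / t`
makes both terms of the exponent equal to `√(bnt/a)`.
-/

open MeasureTheory ProbabilityTheory Set Finset

section

variable {Ω : Type*} {m m0 : MeasurableSpace Ω} {μ : Measure Ω}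

theorem integrable_exp_neg_mul_of_nonneg [IsFiniteMeasure μ] {X : Ω → ℝ} (hX : Measurable X)
    (hX0 : ∀ ω, 0 ≤ X ω) {L : ℝ} (hL : 0 ≤ L) :
    Integrable (fun ω => Real.exp (-(L * X ω))) μ :=
  Integrable.of_bound (by fun_prop) 1 (ae_of_all _ fun ω => by
    rw [Real.norm_of_nonneg (Real.exp_pos _).le]
    exact Real.exp_le_one_iff.2 (by nlinarith [hX0 ω]))

theorem integral_exp_neg_mul_le_of_measureReal_le [IsFiniteMeasure μ] {X : Ω → ℝ}
    (hX : Measurable X) (hX0 : ∀ ω, 0 ≤ X ω) {L a b : ℝ} (hL : 0 < L)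
    (hcdf : ∀ x, 0 < x → μ.real {ω | X ω ≤ x} ≤ (a + b * x) * μ.real univ) :
    ∫ ω, Real.exp (-(L * X ω)) ∂μ ≤ (a + b / L) * μ.real univ := by
  have hexp_le_one : ∀ ω, Real.exp (-(L * X ω)) ≤ 1 :=
    fun ω => Real.exp_le_one_iff.2 (by nlinarith [hX0 ω])
  set g : ℝ → ℝ := fun u => (a - b / L * Real.log u) * μ.real univ
  have hlog := intervalIntegral.intervalIntegrable_log' (a := 0) (b := 1)
  have hg_int : ∫ u in (0 : ℝ)..1, g u = (a + b / L) * μ.real univ := by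
    simp only [g, intervalIntegral.integral_mul_const]
    rw [intervalIntegral.integral_sub intervalIntegrable_const (hlog.const_mul _),
      intervalIntegral.integral_const_mul, integral_log_from_zero]
    simp
  have hlevel_le : ∀ u ∈ Ioo (0 : ℝ) 1, μ.real {ω | u ≤ Real.exp (-(L * X ω))} ≤ g u := by
    rintro u ⟨hu0, hu1⟩
    have hlevel : {ω | u ≤ Real.exp (-(L * X ω))} = {ω | X ω ≤ -Real.log u / L} := by
      ext ω
      simp only [mem_ofPred_eq, ← Real.log_le_iff_le_exp hu0, le_div_iff₀ hL]
      constructor <;> intro h <;> linarith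
    rw [hlevel]
    convert hcdf _ (div_pos (neg_pos.2 (Real.log_neg hu0 hu1)) hL) using 2
    ring
  rw [(integrable_exp_neg_mul_of_nonneg hX hX0 hL.le).integral_eq_integral_Ioc_meas_le
      (ae_of_all _ fun ω => (Real.exp_pos _).le) (ae_of_all _ hexp_le_one),
    ← hg_int, intervalIntegral.integral_of_le zero_le_one, integral_Ioc_eq_integral_Ioo,
    integral_Ioc_eq_integral_Ioo]
  refine integral_mono_of_nonneg (ae_of_all _ fun _ => measureReal_nonneg) ?_
    ((ae_restrict_mem measurableSet_Ioo).mono hlevel_le)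
  exact ((intervalIntegrable_const.sub (hlog.const_mul _)).mul_const _).1.mono_set
    Ioo_subset_Ioc_self

theorem condExp_ae_le_const_iff [IsFiniteMeasure μ] (hm : m ≤ m0) {f : Ω → ℝ}
    (hf : Integrable f μ) {c : ℝ} :
    μ[f | m] ≤ᵐ[μ] (fun _ => c) ↔
      ∀ s, MeasurableSet[m] s → ∫ ω in s, f ω ∂μ ≤ c * μ.real s := by
  constructor
  · intro h s hs
    rw [← setIntegral_condExp hm hf hs, mul_comm, ← smul_eq_mul, ← setIntegral_const]
    exact setIntegral_mono_ae integrable_condExp.integrableOn (integrable_const c).integrableOn h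
  · intro h
    refine ae_le_of_ae_le_trim (hm := hm) <| ae_le_of_forall_setIntegral_le
      (integrable_condExp.trim hm stronglyMeasurable_condExp) (integrable_const c) fun s hs _ => ?_
    rw [← setIntegral_trim hm stronglyMeasurable_condExp hs,
      ← setIntegral_trim hm stronglyMeasurable_const hs, setIntegral_condExp hm hf hs,
      setIntegral_const, smul_eq_mul, mul_comm]
    exact h s hs

/-- On each `m`-measurable set `s`, the conditional bound on the distribution function of `X`
becomes a bound on the distribution function of `X` under `μ.restrict s`. -/
theorem condExp_exp_neg_mul_ae_le [IsFiniteMeasure μ] (hm : m ≤ m0) {X : Ω → ℝ}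
    (hX : Measurable X) (hX0 : ∀ ω, 0 ≤ X ω) {L a b : ℝ} (hL : 0 < L)
    (hcdf : ∀ x, 0 < x →
      μ[{ω | X ω ≤ x}.indicator (fun _ => (1 : ℝ)) | m] ≤ᵐ[μ] fun _ => a + b * x) :
    μ[fun ω => Real.exp (-(L * X ω)) | m] ≤ᵐ[μ] fun _ => a + b / L := by
  rw [condExp_ae_le_const_iff hm (integrable_exp_neg_mul_of_nonneg hX hX0 hL.le)]
  intro s hs
  refine (integral_exp_neg_mul_le_of_measureReal_le (a := a) (b := b) hX hX0 hL
    fun x hx => ?_).trans_eq (by rw [measureReal_restrict_apply_univ])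
  have hXx : MeasurableSet {ω | X ω ≤ x} := measurableSet_le hX measurable_const
  have := (condExp_ae_le_const_iff hm ((integrable_const 1).indicator hXx)).1 (hcdf x hx) s hs
  rw [integral_indicator_const _ hXx, smul_eq_mul, mul_one] at this
  rwa [measureReal_restrict_apply_univ]

theorem integral_mul_le_of_condExp_le (hm : m ≤ m0) [SigmaFinite (μ.trim hm)] {g f : Ω → ℝ}
    (hg : StronglyMeasurable[m] g) (hg0 : ∀ ω, 0 ≤ g ω) (hg_int : Integrable g μ)
    (hf : Integrable f μ) (hgf : Integrable (g * f) μ) {c : ℝ}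
    (hfc : μ[f | m] ≤ᵐ[μ] fun _ => c) :
    ∫ ω, g ω * f ω ∂μ ≤ c * ∫ ω, g ω ∂μ := by
  have hpull := condExp_mul_of_stronglyMeasurable_left hg hgf hf
  calc ∫ ω, g ω * f ω ∂μ = ∫ ω, (μ[g * f | m]) ω ∂μ := (integral_condExp hm).symm
    _ = ∫ ω, g ω * (μ[f | m]) ω ∂μ := integral_congr_ae hpull
    _ ≤ ∫ ω, g ω * c ∂μ :=
        integral_mono_ae (integrable_condExp.congr hpull) (hg_int.mul_const c)
          (hfc.mono fun ω hω => mul_le_mul_of_nonneg_left hω (hg0 ω))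
    _ = c * ∫ ω, g ω ∂μ := by rw [integral_mul_const, mul_comm]

theorem integral_prod_le_pow_mul_of_condExp_le [IsFiniteMeasure μ] {c : ℝ} (hc : 0 ≤ c)
    {n : ℕ} (f : Fin n → Ω → ℝ) (F : Fin n → MeasurableSpace Ω) (hF : ∀ i, F i ≤ m0)
    (hf : ∀ i, Measurable (f i)) (hfF : ∀ j i, j < i → Measurable[F i] (f j))
    (hf0 : ∀ i ω, 0 ≤ f i ω) (hf1 : ∀ i ω, f i ω ≤ 1)
    (hfc : ∀ i, μ[f i | F i] ≤ᵐ[μ] fun _ => c) :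
    ∫ ω, ∏ i, f i ω ∂μ ≤ c ^ n * μ.real univ := by
  have hunit_int : ∀ g : Ω → ℝ, Measurable g → (∀ ω, 0 ≤ g ω) → (∀ ω, g ω ≤ 1) →
      Integrable g μ := fun g hg hg0 hg1 =>
    Integrable.of_bound hg.aestronglyMeasurable 1
      (ae_of_all _ fun ω => by rw [Real.norm_of_nonneg (hg0 ω)]; exact hg1 ω)
  induction n with
  | zero => simp
  | succ n ih =>
    set G : Ω → ℝ := fun ω => ∏ i : Fin n, f i.castSucc ω
    have hG0 : ∀ ω, 0 ≤ G ω := fun ω => prod_nonneg fun i _ => hf0 _ ω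
    have hG1 : ∀ ω, G ω ≤ 1 := fun ω => prod_le_one (fun i _ => hf0 _ ω) fun i _ => hf1 _ ω
    have hGF : Measurable[F (Fin.last n)] G :=
      Finset.measurable_prod _ fun i _ => hfF _ _ (Fin.castSucc_lt_last i)
    have hGm := hGF.mono (hF _) le_rfl
    have hlast := integral_mul_le_of_condExp_le (hF (Fin.last n)) hGF.stronglyMeasurable hG0
      (hunit_int G hGm hG0 hG1) (hunit_int _ (hf _) (hf0 _) (hf1 _))
      (hunit_int _ (hGm.mul (hf _)) (fun ω => mul_nonneg (hG0 ω) (hf0 _ ω))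
        (fun ω => mul_le_one₀ (hG1 ω) (hf0 _ ω) (hf1 _ ω))) (hfc (Fin.last n))
    have hprev := ih (fun i => f i.castSucc) (fun i => F i.castSucc) (fun i => hF _)
      (fun i => hf _) (fun j i hji => hfF _ _ (Fin.castSucc_lt_castSucc_iff.2 hji))
      (fun i => hf0 _) (fun i => hf1 _) (fun i => hfc _)
    simp only [Fin.prod_univ_castSucc]
    calc ∫ ω, G ω * f (Fin.last n) ω ∂μ ≤ c * ∫ ω, G ω ∂μ := hlast
      _ ≤ c * (c ^ n * μ.real univ) := mul_le_mul_of_nonneg_left hprev hc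
      _ = c ^ (n + 1) * μ.real univ := by ring

theorem measureReal_sum_le_le_exp_mul_pow [IsFiniteMeasure μ] {n : ℕ} (η : Fin n → Ω → ℝ)
    (F : Fin n → MeasurableSpace Ω) (hF : ∀ i, F i ≤ m0) (hη : ∀ i, Measurable (η i))
    (hηF : ∀ j i, j < i → Measurable[F i] (η j)) (hη0 : ∀ i ω, 0 ≤ η i ω)
    {L a b : ℝ} (hL : 0 < L) (ha : 0 ≤ a) (hb : 0 ≤ b)
    (hcdf : ∀ i x, 0 < x →
      μ[{ω | η i ω ≤ x}.indicator (fun _ => (1 : ℝ)) | F i] ≤ᵐ[μ] fun _ => a + b * x)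
    (t : ℝ) :
    μ.real {ω | ∑ i, η i ω ≤ t} ≤ Real.exp (L * t) * (a + b / L) ^ n * μ.real univ := by
  have hprod : ∀ ω, Real.exp (-L * ∑ i, η i ω) = ∏ i, Real.exp (-(L * η i ω)) := fun ω => by
    rw [Finset.mul_sum, ← Real.exp_sum]
    simp only [neg_mul]
  have hmgf : mgf (fun ω => ∑ i, η i ω) μ (-L) = ∫ ω, ∏ i, Real.exp (-(L * η i ω)) ∂μ := by
    simp only [mgf, hprod]
  have hint : Integrable (fun ω => Real.exp (-L * ∑ i, η i ω)) μ := by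
    simp only [neg_mul]
    exact integrable_exp_neg_mul_of_nonneg (by fun_prop)
      (fun ω => sum_nonneg fun i _ => hη0 i ω) hL.le
  calc μ.real {ω | ∑ i, η i ω ≤ t}
      ≤ Real.exp (- -L * t) * mgf (fun ω => ∑ i, η i ω) μ (-L) :=
        measure_le_le_exp_mul_mgf t (neg_nonpos.2 hL.le) hint
    _ ≤ Real.exp (L * t) * ((a + b / L) ^ n * μ.real univ) := by
        rw [neg_neg, hmgf]
        refine mul_le_mul_of_nonneg_left ?_ (Real.exp_pos _).le
        exact integral_prod_le_pow_mul_of_condExp_le (by positivity) _ F hF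
          (fun i => by fun_prop) (fun j i hji => ((hηF j i hji).const_mul L).neg.exp)
          (fun i ω => (Real.exp_pos _).le)
          (fun i ω => Real.exp_le_one_iff.2 (by nlinarith [hη0 i ω]))
          (fun i => condExp_exp_neg_mul_ae_le (hF i) (hη i) (hη0 i) hL (hcdf i))
    _ = Real.exp (L * t) * (a + b / L) ^ n * μ.real univ := by ring

theorem biSup_comap_le {ι β : Type*} [MeasurableSpace β] {p : ι → Prop} {f : ι → Ω → β}
    (hf : ∀ i, Measurable (f i)) :
    (⨆ (i : ι) (_ : p i), MeasurableSpace.comap (f i) inferInstance) ≤ m0 :=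
  iSup₂_le fun i _ => (hf i).comap_le

theorem measurable_biSup_comap {ι β : Type*} [MeasurableSpace β] {p : ι → Prop}
    (f : ι → Ω → β) {i : ι} (hi : p i) :
    Measurable[⨆ (i : ι) (_ : p i), MeasurableSpace.comap (f i) inferInstance] (f i) :=
  Measurable.of_comap_le (le_iSup₂ (f := fun i (_ : p i) => MeasurableSpace.comap (f i) _) i hi)

theorem log_measure_le_of_measureReal_le [IsFiniteMeasure μ] {s : Set Ω} {y : ℝ} (hy : 0 < y)
    (h : μ.real s ≤ y) : ENNReal.log (μ s) ≤ Real.log y :=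
  calc ENNReal.log (μ s) ≤ ENNReal.log (ENNReal.ofReal y) :=
        ENNReal.log_le_log ((ENNReal.le_ofReal_iff_toReal_le (measure_ne_top _ _) hy.le).2 h)
    _ = Real.log y := ENNReal.log_ofReal_of_pos hy

end

theorem add_pow_le_pow_mul_exp {a y : ℝ} (ha : 0 < a) (hy : 0 ≤ y) (n : ℕ) :
    (a + y) ^ n ≤ a ^ n * Real.exp (n * y / a) := by
  have hbase : a + y ≤ a * Real.exp (y / a) :=
    calc a + y = a * (y / a + 1) := by field_simp; ring
      _ ≤ a * Real.exp (y / a) := mul_le_mul_of_nonneg_left (Real.add_one_le_exp _) ha.le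
  calc (a + y) ^ n ≤ (a * Real.exp (y / a)) ^ n := pow_le_pow_left₀ (by positivity) hbase n
    _ = a ^ n * Real.exp (n * y / a) := by rw [mul_pow, ← Real.exp_nat_mul, mul_div_assoc]

theorem exit_time_lower_tail_estimate_general {Ω : Type*} [m0 : MeasurableSpace Ω]
    (P : Measure Ω) [IsProbabilityMeasure P] (n : ℕ)
    (η : Fin n → Ω → ℝ) (Φ : Ω → ℝ)
    (hηm : ∀ i, Measurable (η i))
    (hηnn : ∀ i ω, 0 ≤ η i ω)
    (hsum : ∀ ω, ∑ i, η i ω ≤ Φ ω)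
    (a b : ℝ) (ha : a ∈ Ioo (0:ℝ) 1) (hb : 0 < b)
    (hcond : ∀ (i : Fin n) (t : ℝ), 0 < t →
      ∀ᵐ ω ∂P,
        (P[{ω' | η i ω' ≤ t}.indicator (fun _ => (1:ℝ)) |
            ⨆ (j : Fin n) (_ : (j : ℕ) < (i : ℕ)), MeasurableSpace.comap (η j) inferInstance]) ω
          ≤ a + b * t) :
    ∀ t : ℝ, 0 < t →
      ENNReal.log (P {ω | Φ ω ≤ t})
        ≤ ((2 * Real.sqrt (b * n * t / a) - n * Real.log (1 / a) : ℝ) : EReal) := by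
  intro t ht
  obtain ⟨ha0, -⟩ := ha
  rcases n.eq_zero_or_pos with rfl | hn
  · simpa using prob_le_one
  set S := Real.sqrt (b * n * t / a)
  have hS0 : 0 < S := Real.sqrt_pos.2 (by positivity)
  have hS2 : S ^ 2 * a = b * n * t := by
    rw [Real.sq_sqrt (by positivity), div_mul_cancel₀ _ ha0.ne']
  set L := S / t
  have htail := measureReal_sum_le_le_exp_mul_pow (μ := P) η _ (fun i => biSup_comap_le hηm)
    hηm (fun j i hji => measurable_biSup_comap η hji) hηnn (div_pos hS0 ht) ha0.le hb.le hcond t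
  have hexponent : L * t + n * (b / L) / a = 2 * S := by
    simp only [L]
    field_simp
    linarith
  refine (log_measure_le_of_measureReal_le (y := Real.exp (2 * S) * a ^ n) (by positivity)
    ?_).trans_eq ?_
  · calc P.real {ω | Φ ω ≤ t} ≤ P.real {ω | ∑ i, η i ω ≤ t} :=
          measureReal_mono fun ω hω => (hsum ω).trans hω
      _ ≤ Real.exp (L * t) * (a + b / L) ^ n := by simpa using htail
      _ ≤ Real.exp (L * t) * (a ^ n * Real.exp (n * (b / L) / a)) :=
          mul_le_mul_of_nonneg_left (add_pow_le_pow_mul_exp ha0 (by positivity) n) (by positivity)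
      _ = Real.exp (2 * S) * a ^ n := by rw [← hexponent, Real.exp_add]; ring
  · rw [Real.log_mul (by positivity) (by positivity), Real.log_exp, Real.log_pow, one_div,
      Real.log_inv]
    norm_num [sub_eq_add_neg]

/-- Lemma 2.5: if `Φ ≥ ∑ η i` with the `η i` nonnegative and
`P(η i ≤ t | σ(η₁,…,η_{i-1})) ≤ a + b t` a.s. for all `t > 0`, then
`log P(Φ ≤ t) ≤ 2 √(b n t / a) - n log (1/a)` for all `t > 0`
(with `log 0 = -∞`, using the extended-real logarithm). -/
theorem exit_time_lower_tail_estimate {Ω : Type*} [m0 : MeasurableSpace Ω]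
    (P : Measure Ω) [IsProbabilityMeasure P] (n : ℕ)
    (η : Fin n → Ω → ℝ) (Φ : Ω → ℝ)
    (hηm : ∀ i, Measurable (η i)) (hΦm : Measurable Φ)
    (hηnn : ∀ i ω, 0 ≤ η i ω) (hΦnn : ∀ ω, 0 ≤ Φ ω)
    (hsum : ∀ ω, ∑ i, η i ω ≤ Φ ω)
    (a b : ℝ) (ha : a ∈ Ioo (0:ℝ) 1) (hb : 0 < b)
    (hcond : ∀ (i : Fin n) (t : ℝ), 0 < t →
      ∀ᵐ ω ∂P,
        (P[{ω' | η i ω' ≤ t}.indicator (fun _ => (1:ℝ)) |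
            ⨆ (j : Fin n) (_ : (j : ℕ) < (i : ℕ)), MeasurableSpace.comap (η j) inferInstance]) ω
          ≤ a + b * t) :
    ∀ t : ℝ, 0 < t →
      ENNReal.log (P {ω | Φ ω ≤ t})
        ≤ ((2 * Real.sqrt (b * n * t / a) - n * Real.log (1 / a) : ℝ) : EReal) :=
  exit_time_lower_tail_estimate_general (m0 := m0) P n η Φ hηm hηnn hsum a b ha hb hcond
end

section
/- Let W : ℝ → ℝ be continuous with W(0) = 0, S(x) = ∫_0^x e^{W(z)} dz, μ_Y the measure on ℝ with density y ↦ exp(−2W(S^{-1}(y))) with respect to Lebesgue measure (assuming S : ℝ → ℝ is a homeomorphism), and V(S(x),R) = μ_Y((S(x)−R, S(x)+R)). Then with ξ(x,r) = sup_{s,t ∈ [x−r,x+r]}|W(s)−W(t)| and ρ = (2 R V(S(x),R))^{1/2}, one has 2R e^{−2W(x)} e^{−2ξ(x,ρ)} ≤ V(S(x),R) ≤ 2R e^{−2W(x)} e^{2ξ(x,ρ)}. -/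
open MeasureTheory Set intervalIntegral

/-- Lemma 3.1: two-sided volume estimate. With `S(x) = ∫_0^x e^W` a homeomorphism of `ℝ`,
`V(S(x),R) = ∫_{S(x)-R}^{S(x)+R} exp(-2W(S^{-1}(u))) du`, `ρ = √(2RV(S(x),R))` and
`ξ(x,r) = sup_{s,t∈[x-r,x+r]}|W(s)-W(t)|`, one has
`2R e^{-2W(x)} e^{-2ξ(x,ρ)} ≤ V(S(x),R) ≤ 2R e^{-2W(x)} e^{2ξ(x,ρ)}`. -/
theorem volume_two_sided_estimate (W : ℝ → ℝ) (hW : Continuous W) (hW0 : W 0 = 0)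
    (S : ℝ → ℝ) (hSdef : ∀ y, S y = ∫ z in (0:ℝ)..y, Real.exp (W z))
    (hSbij : Function.Bijective S) (x R : ℝ) (hR : 0 < R) (V ρ ξ : ℝ)
    (hV : V = ∫ u in (S x - R)..(S x + R), Real.exp (-2 * W (Function.invFun S u)))
    (hρ : ρ = Real.sqrt (2 * R * V))
    (hξ : ξ = sSup ((fun p : ℝ × ℝ => |W p.1 - W p.2|) ''
        (Icc (x - ρ) (x + ρ) ×ˢ Icc (x - ρ) (x + ρ)))) :
    2 * R * Real.exp (-2 * W x) * Real.exp (-2 * ξ) ≤ V ∧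
    V ≤ 2 * R * Real.exp (-2 * W x) * Real.exp (2 * ξ) := by
  have hWecont : Continuous fun z => Real.exp (W z) := Real.continuous_exp.comp hW
  have hSfun : S = fun y => ∫ z in (0:ℝ)..y, Real.exp (W z) := funext hSdef
  -- derivative of S
  have hderiv : ∀ y, HasDerivAt S (Real.exp (W y)) y := by
    intro y
    rw [hSfun]
    exact intervalIntegral.integral_hasDerivAt_right
      (hWecont.intervalIntegrable _ _)
      (hWecont.stronglyMeasurableAtFilter _ _) hWecont.continuousAt
  have hmono : StrictMono S :=
    strictMono_of_deriv_pos fun y => by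
      rw [(hderiv y).deriv]; exact Real.exp_pos _
  -- the inverse is continuous
  have hinv_eq : Function.invFun S =
      ⇑(StrictMono.orderIsoOfSurjective S hmono hSbij.2).symm := by
    funext u
    apply hSbij.1
    rw [Function.invFun_eq (hSbij.2 u)]
    have := (StrictMono.orderIsoOfSurjective S hmono hSbij.2).apply_symm_apply u
    rw [StrictMono.coe_orderIsoOfSurjective] at this
    exact this.symm
  have hinvcont : Continuous (Function.invFun S) := by
    rw [hinv_eq]; exact OrderIso.continuous _
  set a := Function.invFun S (S x - R) with ha
  set b := Function.invFun S (S x + R) with hb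
  have hSa : S a = S x - R := Function.invFun_eq (hSbij.2 _)
  have hSb : S b = S x + R := Function.invFun_eq (hSbij.2 _)
  have hab : a < b := by
    have : S a < S b := by rw [hSa, hSb]; linarith
    exact hmono.lt_iff_lt.mp this
  have hax : a ≤ x := hmono.le_iff_le.mp (by rw [hSa]; linarith)
  have hxb : x ≤ b := hmono.le_iff_le.mp (by rw [hSb]; linarith)
  -- change of variables
  have hgcont : Continuous fun u => Real.exp (-2 * W (Function.invFun S u)) :=
    Real.continuous_exp.comp (continuous_const.mul (hW.comp hinvcont))
  have hCoV : V = ∫ y in a..b, Real.exp (-W y) := by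
    rw [hV, ← hSa, ← hSb,
      ← intervalIntegral.integral_comp_smul_deriv (fun y _ => hderiv y)
        (hWecont.continuousOn) hgcont]
    apply intervalIntegral.integral_congr
    intro y _
    have hyl : Function.invFun S (S y) = y :=
      Function.leftInverse_invFun hSbij.1 y
    simp only [Function.comp_apply, hyl, smul_eq_mul, ← Real.exp_add]
    ring_nf
  -- total mass 2R
  have h2R : (∫ y in a..b, Real.exp (W y)) = 2 * R := by
    rw [← intervalIntegral.integral_interval_sub_left
      (hWecont.intervalIntegrable 0 b) (hWecont.intervalIntegrable 0 a),
      ← hSdef, ← hSdef, hSa, hSb]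
    ring
  have hVpos : 0 < V := by
    rw [hCoV]
    exact intervalIntegral.intervalIntegral_pos_of_pos_on
      ((Real.continuous_exp.comp hW.neg).intervalIntegrable _ _)
      (fun y _ => Real.exp_pos _) hab
  -- Cauchy-Schwarz: b - a ≤ ρ
  have h2Rpos : (0:ℝ) < 2 * R := by linarith
  have hba : b - a ≤ ρ := by
    set lam := Real.sqrt V / Real.sqrt (2 * R) with hlam
    have hsV : Real.sqrt V * Real.sqrt V = V := Real.mul_self_sqrt hVpos.le
    have hs2R : Real.sqrt (2 * R) * Real.sqrt (2 * R) = 2 * R :=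
      Real.mul_self_sqrt h2Rpos.le
    have hsVpos : 0 < Real.sqrt V := Real.sqrt_pos.2 hVpos
    have hs2Rpos : 0 < Real.sqrt (2 * R) := Real.sqrt_pos.2 h2Rpos
    have hlampos : 0 < lam := div_pos hsVpos hs2Rpos
    have hpt : ∀ y : ℝ, (1:ℝ) ≤
        (lam * Real.exp (W y) + lam⁻¹ * Real.exp (-W y)) / 2 := by
      intro y
      have ht : 0 < Real.exp (W y) := Real.exp_pos _
      rw [Real.exp_neg, le_div_iff₀ (by norm_num : (0:ℝ) < 2)]
      have key : lam * Real.exp (W y) + lam⁻¹ * (Real.exp (W y))⁻¹ - 2 =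
          (lam * Real.exp (W y) - 1)^2 / (lam * Real.exp (W y)) := by
        field_simp
        ring
      have h0 : 0 ≤ (lam * Real.exp (W y) - 1)^2 / (lam * Real.exp (W y)) :=
        div_nonneg (sq_nonneg _) (mul_pos hlampos ht).le
      rw [← key] at h0
      linarith
    have hintRHS : IntervalIntegrable
        (fun y => (lam * Real.exp (W y) + lam⁻¹ * Real.exp (-W y)) / 2)
        volume a b :=
      (((continuous_const.mul hWecont).add
        (continuous_const.mul (Real.continuous_exp.comp hW.neg))).div_const 2).intervalIntegrable _ _
    have hint1 : (b - a : ℝ) = ∫ _ in a..b, (1:ℝ) := by simp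
    have hmonoInt : (b - a : ℝ) ≤
        ∫ y in a..b, (lam * Real.exp (W y) + lam⁻¹ * Real.exp (-W y)) / 2 := by
      rw [hint1]
      exact intervalIntegral.integral_mono_on hab.le
        (intervalIntegrable_const) hintRHS (fun y _ => hpt y)
    have hcalc : (∫ y in a..b, (lam * Real.exp (W y) + lam⁻¹ * Real.exp (-W y)) / 2)
        = (lam * (2 * R) + lam⁻¹ * V) / 2 := by
      have hi1 : IntervalIntegrable (fun y => lam * Real.exp (W y)) volume a b :=
        (continuous_const.mul hWecont).intervalIntegrable _ _
      have hi2 : IntervalIntegrable (fun y => lam⁻¹ * Real.exp (-W y)) volume a b :=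
        (continuous_const.mul (Real.continuous_exp.comp hW.neg)).intervalIntegrable _ _
      rw [intervalIntegral.integral_div, intervalIntegral.integral_add hi1 hi2,
        intervalIntegral.integral_const_mul, intervalIntegral.integral_const_mul,
        h2R, ← hCoV]
    have hval : (lam * (2 * R) + lam⁻¹ * V) / 2 = ρ := by
      have hρ' : ρ = Real.sqrt (2 * R) * Real.sqrt V := by
        rw [hρ, Real.sqrt_mul h2Rpos.le]
      have e1 : lam * (2 * R) = Real.sqrt V * Real.sqrt (2 * R) := by
        rw [hlam, div_mul_eq_mul_div, mul_div_assoc, Real.div_sqrt]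
      have e2 : lam⁻¹ * V = Real.sqrt (2 * R) * Real.sqrt V := by
        rw [hlam, inv_div, div_mul_eq_mul_div, mul_div_assoc, Real.div_sqrt]
      rw [hρ', e1, e2]; ring
    rw [hcalc, hval] at hmonoInt
    exact hmonoInt
  have hρ0 : 0 ≤ ρ := by rw [hρ]; exact Real.sqrt_nonneg _
  -- ξ bounds oscillation on [a,b]
  have hsub : Icc a b ⊆ Icc (x - ρ) (x + ρ) := by
    apply Icc_subset_Icc <;> linarith
  have hbdd : BddAbove ((fun p : ℝ × ℝ => |W p.1 - W p.2|) ''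
      (Icc (x - ρ) (x + ρ) ×ˢ Icc (x - ρ) (x + ρ))) := by
    have hc : Continuous fun p : ℝ × ℝ => |W p.1 - W p.2| :=
      ((hW.comp continuous_fst).sub (hW.comp continuous_snd)).abs
    exact ((isCompact_Icc.prod isCompact_Icc).image hc).bddAbove
  have hxmem : x ∈ Icc (x - ρ) (x + ρ) := by constructor <;> linarith
  have hξge : ∀ y ∈ Icc a b, |W y - W x| ≤ ξ := by
    intro y hy
    rw [hξ]
    exact le_csSup hbdd ⟨(y, x), ⟨hsub hy, hxmem⟩, rfl⟩
  -- final estimates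
  have hintm : IntervalIntegrable (fun y => Real.exp (-W y)) volume a b :=
    (Real.continuous_exp.comp hW.neg).intervalIntegrable _ _
  constructor
  · calc 2 * R * Real.exp (-2 * W x) * Real.exp (-2 * ξ)
        = Real.exp (-2 * W x + -2 * ξ) * ∫ y in a..b, Real.exp (W y) := by
          rw [h2R, Real.exp_add]; ring
      _ = ∫ y in a..b, Real.exp (-2 * W x + -2 * ξ) * Real.exp (W y) :=
          (intervalIntegral.integral_const_mul _ _).symm
      _ ≤ ∫ y in a..b, Real.exp (-W y) := by
          apply intervalIntegral.integral_mono_on hab.le _ hintm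
          · intro y hy
            rw [← Real.exp_add]
            apply Real.exp_le_exp.2
            have h := hξge y hy
            rw [abs_le] at h
            linarith [h.1, h.2]
          · exact (continuous_const.mul hWecont).intervalIntegrable _ _
      _ = V := hCoV.symm
  · calc V = ∫ y in a..b, Real.exp (-W y) := hCoV
      _ ≤ ∫ y in a..b, Real.exp (-2 * W x + 2 * ξ) * Real.exp (W y) := by
          apply intervalIntegral.integral_mono_on hab.le hintm
          · exact (continuous_const.mul hWecont).intervalIntegrable _ _
          · intro y hy
            rw [← Real.exp_add]
            apply Real.exp_le_exp.2
            have h := hξge y hy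
            rw [abs_le] at h
            linarith [h.1, h.2]
      _ = Real.exp (-2 * W x + 2 * ξ) * ∫ y in a..b, Real.exp (W y) :=
          intervalIntegral.integral_const_mul _ _
      _ = 2 * R * Real.exp (-2 * W x) * Real.exp (2 * ξ) := by
          rw [h2R, Real.exp_add]; ring
end

section
/- Let ψ : (0,∞) → (0,∞) be differentiable and non-increasing, and suppose there exist constants b > 0 such that for all t > 0 and all r > 0, ψ'(t) ≤ (1/(2r))·(2/V(r)² − ψ(t)²), where V : (0,∞) → (0,∞) is a continuous non-decreasing function with lim_{r→∞} V(r) = ∞ and such that for each t > 0 there exists r(t) > 0 with 2/ψ(t) = V(r(t)). Then for every t > 0, ψ(4 V(r(t)) r(t)) ≤ 2/V(r(t)). -/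
open Set Filter

/-!
Put `R = r(t)` and `φ = 1 / ψ`, so that `φ(t) = V(R) / 2`. On `[t/2, t]` monotonicity gives
`ψ ≥ ψ(t) = 2 / V(R)`, so the Nash inequality at the fixed scale `R` yields `ψ' ≤ -ψ² / (4R)`,
i.e. `φ' ≥ 1 / (4R)`. Integrating, `V(R) / 2 = φ(t) > φ(t) - φ(t/2) ≥ t / (8R)`, so
`t ≤ 4 V(R) R` and `ψ(4 V(R) R) ≤ ψ(t) = 2 / V(R)`.
-/

theorem mul_sub_le_inv_sub_inv_of_le_neg_deriv_div_sq {ψ ψ' : ℝ → ℝ} {a b c : ℝ} (hab : a ≤ b)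
    (hpos : ∀ u ∈ Icc a b, 0 < ψ u) (hderiv : ∀ u ∈ Icc a b, HasDerivAt ψ (ψ' u) u)
    (hc : ∀ u ∈ Ioo a b, c ≤ -ψ' u / ψ u ^ 2) :
    c * (b - a) ≤ (ψ b)⁻¹ - (ψ a)⁻¹ := by
  have hinv : ∀ u ∈ Icc a b, HasDerivAt ψ⁻¹ (-ψ' u / ψ u ^ 2) u :=
    fun u hu => (hderiv u hu).inv (hpos u hu).ne'
  refine (convex_Icc a b).mul_sub_le_image_sub_of_le_deriv
    (fun u hu => (hinv u hu).continuousAt.continuousWithinAt) ?_ ?_ a (left_mem_Icc.2 hab) b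
    (right_mem_Icc.2 hab) hab
  · rw [interior_Icc]
    exact fun u hu => (hinv u (Ioo_subset_Icc_self hu)).differentiableAt.differentiableWithinAt
  · rw [interior_Icc]
    intro u hu
    rw [(hinv u (Ioo_subset_Icc_self hu)).deriv]
    exact hc u hu

/-- Read with `x = ψ(u)`, `d = ψ'(u)`, `v = V(s)`. -/
theorem inv_four_mul_le_neg_div_sq_of_nash {s v x d : ℝ} (hs : 0 < s) (hv : 0 < v)
    (hx : 2 / v ≤ x) (hd : d ≤ 1 / (2 * s) * (2 / v ^ 2 - x ^ 2)) :
    1 / (4 * s) ≤ -d / x ^ 2 := by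
  have hx0 : 0 < x := lt_of_lt_of_le (by positivity) hx
  have hxv : 2 ≤ x * v := by rwa [div_le_iff₀ hv] at hx
  have hv2 : 2 / v ^ 2 ≤ x ^ 2 / 2 := by
    rw [div_le_div_iff₀ (by positivity) two_pos]
    nlinarith
  have hd' : d ≤ -x ^ 2 / (4 * s) :=
    calc d ≤ 1 / (2 * s) * (2 / v ^ 2 - x ^ 2) := hd
      _ ≤ 1 / (2 * s) * (x ^ 2 / 2 - x ^ 2) := by gcongr
      _ = -x ^ 2 / (4 * s) := by field_simp; ring
  rw [div_le_div_iff₀ (by positivity) (by positivity)]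
  rw [le_div_iff₀ (by positivity)] at hd'
  nlinarith

theorem nash_ode_comparison_general (ψ ψ' V r : ℝ → ℝ)
    (hψpos : ∀ t, 0 < t → 0 < ψ t)
    (hψmono : ∀ s t, 0 < s → s ≤ t → ψ t ≤ ψ s)
    (hψderiv : ∀ t, 0 < t → HasDerivAt ψ (ψ' t) t)
    (hVpos : ∀ s, 0 < s → 0 < V s)
    (hineq : ∀ t s, 0 < t → 0 < s → ψ' t ≤ (1 / (2 * s)) * (2 / (V s) ^ 2 - (ψ t) ^ 2))
    (hr : ∀ t, 0 < t → 0 < r t ∧ 2 / ψ t = V (r t)) :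
    ∀ t, 0 < t → ψ (4 * V (r t) * r t) ≤ 2 / V (r t) := by
  intro t ht
  obtain ⟨hR, hVR⟩ := hr t ht
  set R := r t
  have hψt : ψ t = 2 / V R := by rw [← hVR, div_div_cancel₀ two_ne_zero]
  have hmem : ∀ u ∈ Icc (t / 2) t, 0 < u := fun u hu => by linarith [hu.1]
  have hψu : ∀ u ∈ Icc (t / 2) t, 2 / V R ≤ ψ u := fun u hu => hψt ▸ hψmono u t (hmem u hu) hu.2
  have hgrowth : 1 / (4 * R) * (t - t / 2) ≤ (ψ t)⁻¹ - (ψ (t / 2))⁻¹ :=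
    mul_sub_le_inv_sub_inv_of_le_neg_deriv_div_sq (by linarith)
      (fun u hu => hψpos u (hmem u hu)) (fun u hu => hψderiv u (hmem u hu))
      fun u hu => inv_four_mul_le_neg_div_sq_of_nash hR (hVpos R hR)
        (hψu u (Ioo_subset_Icc_self hu)) (hineq u R (hmem u (Ioo_subset_Icc_self hu)) hR)
  have htime : t ≤ 4 * V R * R := by
    have hψhalf := hψpos (t / 2) (by linarith)
    rw [hψt, inv_div] at hgrowth
    have h : t / (4 * R) ≤ V R :=
      calc t / (4 * R) = 1 / (4 * R) * (t - t / 2) * 2 := by ring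
        _ ≤ (V R / 2 - (ψ (t / 2))⁻¹) * 2 := by gcongr
        _ ≤ V R := by linarith [inv_pos.2 hψhalf]
    rw [div_le_iff₀ (by positivity)] at h
    linarith
  calc ψ (4 * V R * R) ≤ ψ t := hψmono t _ ht htime
    _ = 2 / V R := hψt

/-- Abstract Nash-type comparison: if `ψ` is positive, non-increasing and differentiable
on `(0,∞)` with `ψ'(t) ≤ (1/(2r))(2/V(r)² - ψ(t)²)` for all `t, r > 0`, where `V` is
continuous, non-decreasing, tends to `∞`, and `r(t) > 0` satisfies `2/ψ(t) = V(r(t))`,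
then `ψ(4 V(r(t)) r(t)) ≤ 2/V(r(t))` for every `t > 0`. -/
theorem nash_ode_comparison (ψ ψ' V r : ℝ → ℝ)
    (hψpos : ∀ t, 0 < t → 0 < ψ t)
    (hψmono : ∀ s t, 0 < s → s ≤ t → ψ t ≤ ψ s)
    (hψderiv : ∀ t, 0 < t → HasDerivAt ψ (ψ' t) t)
    (hVpos : ∀ s, 0 < s → 0 < V s)
    (hVcont : ContinuousOn V (Ioi 0))
    (hVmono : ∀ s t, 0 < s → s ≤ t → V s ≤ V t)
    (hVtop : Tendsto V atTop atTop)
    (hineq : ∀ t s, 0 < t → 0 < s → ψ' t ≤ (1 / (2 * s)) * (2 / (V s) ^ 2 - (ψ t) ^ 2))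
    (hr : ∀ t, 0 < t → 0 < r t ∧ 2 / ψ t = V (r t)) :
    ∀ t, 0 < t → ψ (4 * V (r t) * r t) ≤ 2 / V (r t) :=
  nash_ode_comparison_general ψ ψ' V r hψpos hψmono hψderiv hVpos hineq hr
end

section
/- Let W : ℝ → ℝ be continuous with W(0)=0 and define, for x ∈ ℝ and R > 0, the quantity E(x,R) = ∫_{x−R}^{x+R} G_{(S(x−R),S(x+R))}(S(x),S(z)) e^{−W(z)} dz, where S(x) = ∫_0^x e^{W(z)} dz and G_{(a,b)} is the Brownian Green function on (a,b). Let ξ(x,R) = sup_{s,t∈[x−R,x+R]}|W(s)−W(t)|. Then there exist absolute constants c, C > 0 (independent of W, x, R) such that c R² e^{−4ξ(x,R)} ≤ E(x,R) ≤ C R² e^{4ξ(x,R)}. -/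
open MeasureTheory Set intervalIntegral

/-- The Green function of Brownian motion killed on exiting `(a,b)`. -/
noncomputable def brownianGreen (a b y z : ℝ) : ℝ :=
  if y ≤ z then 2 * (b - a)⁻¹ * (y - a) * (b - z)
  else 2 * (b - a)⁻¹ * (b - y) * (z - a)

private lemma mul4_le {a1 a2 a3 a4 b1 b2 b3 b4 : ℝ}
    (ha1 : 0 ≤ a1) (ha2 : 0 ≤ a2) (ha3 : 0 ≤ a3) (ha4 : 0 ≤ a4)
    (h1 : a1 ≤ b1) (h2 : a2 ≤ b2) (h3 : a3 ≤ b3) (h4 : a4 ≤ b4) :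
    2 * a1 * a2 * a3 * a4 ≤ 2 * b1 * b2 * b3 * b4 := by
  have hb1 := ha1.trans h1
  have hb2 := ha2.trans h2
  have hb3 := ha3.trans h3
  apply mul_le_mul _ h4 ha4 (by positivity)
  apply mul_le_mul _ h3 ha3 (by positivity)
  apply mul_le_mul _ h2 ha2 (by positivity)
  linarith

set_option maxHeartbeats 2000000 in
/-- Lemma 3.2 (deterministic form): with `S(x) = ∫_0^x e^W`,
`E(x,R) = ∫_{x-R}^{x+R} G_{(S(x-R),S(x+R))}(S(x),S(z)) e^{-W(z)} dz`, the mean exit time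
of Brox's diffusion from `B(x,R)`, and `ξ(x,R)` the oscillation of `W` on `[x-R,x+R]`,
there are absolute constants `c, C > 0` such that
`c R² e^{-4ξ(x,R)} ≤ E(x,R) ≤ C R² e^{4ξ(x,R)}`. -/
theorem mean_exit_time_estimate :
    ∃ c C : ℝ, 0 < c ∧ 0 < C ∧
      ∀ (W : ℝ → ℝ), Continuous W → W 0 = 0 →
        ∀ (x R : ℝ), 0 < R →
          let S : ℝ → ℝ := fun y => ∫ z in (0:ℝ)..y, Real.exp (W z)
          let ξ : ℝ := sSup ((fun p : ℝ × ℝ => |W p.1 - W p.2|) ''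
            (Icc (x - R) (x + R) ×ˢ Icc (x - R) (x + R)))
          let E : ℝ := ∫ z in (x - R)..(x + R),
            brownianGreen (S (x - R)) (S (x + R)) (S x) (S z) * Real.exp (-W z)
          c * R ^ 2 * Real.exp (-4 * ξ) ≤ E ∧ E ≤ C * R ^ 2 * Real.exp (4 * ξ) := by
  refine ⟨1/4, 4, by norm_num, by norm_num, ?_⟩
  intro W hW hW0 x R hR S ξ E
  have hexp : Continuous fun z => Real.exp (W z) := Real.continuous_exp.comp hW
  have hInt : ∀ a b : ℝ, IntervalIntegrable (fun z => Real.exp (W z)) volume a b :=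
    fun a b => hexp.intervalIntegrable a b
  have hSdiff : ∀ a b : ℝ, S b - S a = ∫ z in a..b, Real.exp (W z) := fun a b =>
    intervalIntegral.integral_interval_sub_left (hInt 0 b) (hInt 0 a)
  have hScont : Continuous S := intervalIntegral.continuous_primitive hInt 0
  -- ξ facts
  have hcompact : IsCompact (Icc (x - R) (x + R) ×ˢ Icc (x - R) (x + R)) :=
    isCompact_Icc.prod isCompact_Icc
  have hcont : Continuous fun p : ℝ × ℝ => |W p.1 - W p.2| :=
    ((hW.comp continuous_fst).sub (hW.comp continuous_snd)).abs
  have hbdd : BddAbove ((fun p : ℝ × ℝ => |W p.1 - W p.2|) ''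
      (Icc (x - R) (x + R) ×ˢ Icc (x - R) (x + R))) :=
    (hcompact.image hcont).bddAbove
  have hξ : ∀ s t, s ∈ Icc (x - R) (x + R) → t ∈ Icc (x - R) (x + R) → |W s - W t| ≤ ξ :=
    fun s t hs ht => le_csSup hbdd ⟨(s, t), ⟨hs, ht⟩, rfl⟩
  have hxmem : x ∈ Icc (x - R) (x + R) := ⟨by linarith, by linarith⟩
  have hξ0 : 0 ≤ ξ := le_trans (by simp) (hξ x x hxmem hxmem)
  have hWb : ∀ z ∈ Icc (x - R) (x + R), W x - ξ ≤ W z ∧ W z ≤ W x + ξ := by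
    intro z hz
    have h := abs_le.1 (hξ z x hz hxmem)
    constructor <;> linarith [h.1, h.2]
  set P := Real.exp (W x) with hP
  set Q := Real.exp ξ with hQ
  have hP0 : 0 < P := Real.exp_pos _
  have hQ0 : 0 < Q := Real.exp_pos _
  have hmdef : Real.exp (W x - ξ) = P / Q := Real.exp_sub _ _
  have hMdef : Real.exp (W x + ξ) = P * Q := Real.exp_add _ _
  have hm0 : 0 < P / Q := div_pos hP0 hQ0
  -- quantitative bounds on S increments
  have hSbound : ∀ a b : ℝ, x - R ≤ a → a ≤ b → b ≤ x + R →
      P / Q * (b - a) ≤ S b - S a ∧ S b - S a ≤ P * Q * (b - a) := by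
    intro a b ha hab hb
    rw [hSdiff]
    constructor
    · calc P / Q * (b - a) = ∫ _ in a..b, P / Q := by
            rw [intervalIntegral.integral_const, smul_eq_mul]; ring
        _ ≤ ∫ z in a..b, Real.exp (W z) := by
            apply intervalIntegral.integral_mono_on hab (intervalIntegrable_const) (hInt a b)
            intro z hz
            rw [← hmdef]
            exact Real.exp_le_exp.2 (hWb z ⟨le_trans ha hz.1, le_trans hz.2 hb⟩).1
    · calc (∫ z in a..b, Real.exp (W z)) ≤ ∫ _ in a..b, P * Q := by
            apply intervalIntegral.integral_mono_on hab (hInt a b) intervalIntegrable_const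
            intro z hz
            rw [← hMdef]
            exact Real.exp_le_exp.2 (hWb z ⟨le_trans ha hz.1, le_trans hz.2 hb⟩).2
        _ = P * Q * (b - a) := by rw [intervalIntegral.integral_const, smul_eq_mul]; ring
  set a := S (x - R) with ha
  set b := S (x + R) with hb
  have hba1 := hSbound (x - R) (x + R) le_rfl (by linarith) le_rfl
  have hba_lo : P / Q * (2 * R) ≤ b - a := by
    have := hba1.1; nlinarith [this]
  have hba_hi : b - a ≤ P * Q * (2 * R) := by
    have := hba1.2; nlinarith [this]
  have hba0 : 0 < b - a := lt_of_lt_of_le (by positivity) hba_lo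
  have hSxa := hSbound (x - R) x le_rfl (by linarith) (by linarith)
  have hSxa_lo : P / Q * R ≤ S x - a := by have := hSxa.1; nlinarith [this]
  have hSxa_hi : S x - a ≤ P * Q * R := by have := hSxa.2; nlinarith [this]
  have hbSx := hSbound x (x + R) (by linarith) (by linarith) le_rfl
  have hbSx_lo : P / Q * R ≤ b - S x := by have := hbSx.1; nlinarith [this]
  have hbSx_hi : b - S x ≤ P * Q * R := by have := hbSx.2; nlinarith [this]
  -- the integrand
  set f : ℝ → ℝ := fun z => brownianGreen a b (S x) (S z) * Real.exp (-W z) with hf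
  have hfcont : Continuous f := by
    apply Continuous.mul ?_ (Real.continuous_exp.comp hW.neg)
    unfold brownianGreen
    apply Continuous.if_le
    · fun_prop
    · fun_prop
    · exact continuous_const
    · exact hScont
    · intro z hz; rw [← hz]; ring
  have hfInt : ∀ u v : ℝ, IntervalIntegrable f volume u v := fun u v =>
    hfcont.intervalIntegrable u v
  -- pointwise bounds
  have hexp_hi : ∀ z ∈ Icc (x - R) (x + R), Real.exp (-W z) ≤ Q / P := by
    intro z hz
    have := (hWb z hz).1
    calc Real.exp (-W z) ≤ Real.exp (ξ - W x) := Real.exp_le_exp.2 (by linarith)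
      _ = Q / P := Real.exp_sub _ _
  have hexp_lo : ∀ z ∈ Icc (x - R) (x + R), (P * Q)⁻¹ ≤ Real.exp (-W z) := by
    intro z hz
    have := (hWb z hz).2
    calc (P * Q)⁻¹ = Real.exp (-(W x + ξ)) := by rw [Real.exp_neg, hMdef]
      _ ≤ Real.exp (-W z) := Real.exp_le_exp.2 (by linarith)
  have hSz_lo : ∀ z ∈ Icc (x - R) (x + R), a ≤ S z := by
    intro z hz
    have := (hSbound (x - R) z le_rfl hz.1 hz.2).1
    nlinarith [mul_nonneg hm0.le (sub_nonneg.2 hz.1)]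
  have hSz_hi : ∀ z ∈ Icc (x - R) (x + R), S z ≤ b := by
    intro z hz
    have := (hSbound z (x + R) hz.1 hz.2 le_rfl).1
    nlinarith [mul_nonneg hm0.le (sub_nonneg.2 hz.2)]
  have hf_nonneg : ∀ z ∈ Icc (x - R) (x + R), 0 ≤ f z := by
    intro z hz
    have h1 := hSz_lo z hz
    have h2 := hSz_hi z hz
    have h3 := hSz_lo x hxmem
    have h4 := hSz_hi x hxmem
    unfold f
    unfold brownianGreen
    beta_reduce
    split_ifs with h
    · exact mul_nonneg (mul_nonneg (mul_nonneg (mul_nonneg (by norm_num)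
        (inv_nonneg.2 hba0.le)) (by linarith)) (by linarith)) (Real.exp_pos _).le
    · exact mul_nonneg (mul_nonneg (mul_nonneg (mul_nonneg (by norm_num)
        (inv_nonneg.2 hba0.le)) (by linarith)) (by linarith)) (Real.exp_pos _).le
  have hQ4 : Real.exp (4 * ξ) = Q ^ 4 := by
    rw [hQ, ← Real.exp_nat_mul]; norm_num
  have hQ4' : Real.exp (-4 * ξ) = (Q ^ 4)⁻¹ := by
    rw [show (-4 : ℝ) * ξ = -(4 * ξ) by ring, Real.exp_neg, hQ4]
  -- upper bound on f
  have hf_ub : ∀ z ∈ Icc (x - R) (x + R), f z ≤ 2 * R * Q ^ 4 := by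
    intro z hz
    have h1 := hSz_lo z hz
    have h2 := hSz_hi z hz
    have h3 := hSz_lo x hxmem
    have h4 := hSz_hi x hxmem
    have he := hexp_hi z hz
    have he0 : 0 ≤ Real.exp (-W z) := (Real.exp_pos _).le
    have key : 2 * (P / Q * (2 * R))⁻¹ * (P * Q * R) * (P * Q * (2 * R)) * (Q / P)
        = 2 * R * Q ^ 4 := by
      field_simp
    unfold f
    unfold brownianGreen
    beta_reduce
    split_ifs with h
    · calc 2 * (b - a)⁻¹ * (S x - a) * (b - S z) * Real.exp (-W z)
          ≤ 2 * (P / Q * (2 * R))⁻¹ * (P * Q * R) * (P * Q * (2 * R)) * (Q / P) := by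
            refine mul4_le (inv_nonneg.2 hba0.le) (by linarith) (by linarith) he0
              (inv_anti₀ (by positivity) hba_lo) hSxa_hi ?_ he
            nlinarith [(hSbound z (x + R) hz.1 hz.2 le_rfl).2,
              mul_nonneg (mul_nonneg hP0.le hQ0.le) (sub_nonneg.2 hz.1)]
        _ = 2 * R * Q ^ 4 := key
    · calc 2 * (b - a)⁻¹ * (b - S x) * (S z - a) * Real.exp (-W z)
          ≤ 2 * (P / Q * (2 * R))⁻¹ * (P * Q * R) * (P * Q * (2 * R)) * (Q / P) := by
            refine mul4_le (inv_nonneg.2 hba0.le) (by linarith) (by linarith) he0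
              (inv_anti₀ (by positivity) hba_lo) hbSx_hi ?_ he
            nlinarith [(hSbound (x - R) z le_rfl hz.1 hz.2).2,
              mul_nonneg (mul_nonneg hP0.le hQ0.le) (sub_nonneg.2 hz.2)]
        _ = 2 * R * Q ^ 4 := key
  -- lower bound on f on [x, x + R/2]
  have hf_lb : ∀ z ∈ Icc x (x + R / 2), R / 2 * (Q ^ 4)⁻¹ ≤ f z := by
    intro z hz
    have hzmem : z ∈ Icc (x - R) (x + R) := ⟨by linarith [hz.1], by linarith [hz.2]⟩
    have hSxz : S x ≤ S z := by
      have := (hSbound x z (by linarith) hz.1 (by linarith [hz.2])).1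
      nlinarith [mul_nonneg hm0.le (sub_nonneg.2 hz.1)]
    have hbSz : P / Q * (R / 2) ≤ b - S z := by
      have := (hSbound z (x + R) hzmem.1 hzmem.2 le_rfl).1
      nlinarith [this, mul_nonneg hm0.le (by linarith [hz.2] : (0:ℝ) ≤ x + R - z - R / 2)]
    have he := hexp_lo z hzmem
    have key : 2 * (P * Q * (2 * R))⁻¹ * (P / Q * R) * (P / Q * (R / 2)) * (P * Q)⁻¹
        = R / 2 * (Q ^ 4)⁻¹ := by
      field_simp
    unfold f
    unfold brownianGreen
    beta_reduce
    rw [if_pos hSxz]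
    calc R / 2 * (Q ^ 4)⁻¹
        = 2 * (P * Q * (2 * R))⁻¹ * (P / Q * R) * (P / Q * (R / 2)) * (P * Q)⁻¹ := key.symm
      _ ≤ 2 * (b - a)⁻¹ * (S x - a) * (b - S z) * Real.exp (-W z) :=
          mul4_le (inv_nonneg.2 (mul_nonneg (mul_nonneg hP0.le hQ0.le) (by linarith)))
            (mul_nonneg (div_nonneg hP0.le hQ0.le) hR.le)
            (mul_nonneg (div_nonneg hP0.le hQ0.le) (by linarith))
            (inv_nonneg.2 (mul_nonneg hP0.le hQ0.le))
            (inv_anti₀ hba0 hba_hi) hSxa_lo hbSz he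
  constructor
  · -- lower bound on E
    have hsplit1 : E = (∫ z in (x - R)..x, f z) + ∫ z in x..(x + R), f z :=
      (intervalIntegral.integral_add_adjacent_intervals (hfInt _ _) (hfInt _ _)).symm
    have hsplit2 : (∫ z in x..(x + R), f z)
        = (∫ z in x..(x + R / 2), f z) + ∫ z in (x + R / 2)..(x + R), f z :=
      (intervalIntegral.integral_add_adjacent_intervals (hfInt _ _) (hfInt _ _)).symm
    have h1 : 0 ≤ ∫ z in (x - R)..x, f z :=
      intervalIntegral.integral_nonneg (by linarith)
        (fun u hu => hf_nonneg u ⟨hu.1, by linarith [hu.2]⟩)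
    have h3 : 0 ≤ ∫ z in (x + R / 2)..(x + R), f z :=
      intervalIntegral.integral_nonneg (by linarith)
        (fun u hu => hf_nonneg u ⟨by linarith [hu.1], hu.2⟩)
    have h2 : R / 2 * (R / 2 * (Q ^ 4)⁻¹) ≤ ∫ z in x..(x + R / 2), f z := by
      calc R / 2 * (R / 2 * (Q ^ 4)⁻¹) = ∫ _ in x..(x + R / 2), R / 2 * (Q ^ 4)⁻¹ := by
            rw [intervalIntegral.integral_const, smul_eq_mul]; ring_nf
        _ ≤ ∫ z in x..(x + R / 2), f z :=
            intervalIntegral.integral_mono_on (by linarith) intervalIntegrable_const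
              (hfInt _ _) hf_lb
    rw [hQ4']
    have : 1 / 4 * R ^ 2 * (Q ^ 4)⁻¹ = R / 2 * (R / 2 * (Q ^ 4)⁻¹) := by ring
    rw [this]
    calc R / 2 * (R / 2 * (Q ^ 4)⁻¹) ≤ ∫ z in x..(x + R / 2), f z := h2
      _ ≤ E := by rw [hsplit1, hsplit2]; linarith
  · -- upper bound on E
    rw [hQ4]
    calc E ≤ ∫ _ in (x - R)..(x + R), 2 * R * Q ^ 4 :=
          intervalIntegral.integral_mono_on (by linarith) (hfInt _ _)
            intervalIntegrable_const hf_ub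
      _ = 4 * R ^ 2 * Q ^ 4 := by
          rw [intervalIntegral.integral_const, smul_eq_mul]; ring
end

section
/- Let X be a symmetric Markov process on ℝ with symmetrizing measure μ admitting a symmetric heat kernel p(t,x,y) with respect to μ. Then for all x ∈ ℝ, R > 0 and t > 0, p(2t,x,x) ≥ P^x(τ_{B(x,R)} > t)² / μ(B(x,R)), where τ_{B(x,R)} is the exit time from B(x,R) = (x−R, x+R). -/
/-!
Cauchy–Schwarz against the indicator of the ball bounds the squared survival probability
`(∫_B p_B(t,x,·))²` by `μ(B) · ∫_B p_B(t,x,·)²`; domination `p_B ≤ p` and Chapman–Kolmogorov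
bound the last integral by `∫ p(t,x,·)² = p(2t,x,x)`.
-/

open MeasureTheory Set

section CauchySchwarz

variable {α : Type*} [MeasurableSpace α] {μ : Measure α} {f g : α → ℝ}

theorem sq_integral_le_integral_sq_mul_measureReal_univ [IsFiniteMeasure μ] (hf : MemLp f 2 μ) :
    (∫ a, f a ∂μ) ^ 2 ≤ (∫ a, f a ^ 2 ∂μ) * μ.real univ := by
  have hHolder := integral_mul_le_Lp_mul_Lq_of_nonneg (μ := μ) Real.HolderConjugate.two_two
    (f := fun a => |f a|) (g := fun _ => 1) (.of_forall fun a => abs_nonneg (f a))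
    (.of_forall fun _ => zero_le_one) (by rw [ENNReal.ofReal_ofNat]; exact hf.abs) (memLp_const 1)
  simp only [mul_one, Real.rpow_two, sq_abs, one_pow, integral_const, smul_eq_mul,
    ← Real.sqrt_eq_rpow] at hHolder
  calc (∫ a, f a ∂μ) ^ 2 ≤ (∫ a, |f a| ∂μ) ^ 2 := by
        simpa only [sq_abs] using pow_le_pow_left₀ (abs_nonneg _) abs_integral_le_integral_abs 2
    _ ≤ (√(∫ a, f a ^ 2 ∂μ) * √(μ.real univ)) ^ 2 :=
        pow_le_pow_left₀ (integral_nonneg fun a => abs_nonneg (f a)) hHolder 2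
    _ = (∫ a, f a ^ 2 ∂μ) * μ.real univ := by
        rw [mul_pow, Real.sq_sqrt (integral_nonneg fun a => sq_nonneg (f a)),
          Real.sq_sqrt measureReal_nonneg]

theorem sq_setIntegral_le_integral_sq_mul_measureReal {s : Set α} (hs : μ s ≠ ⊤)
    (hfg : ∀ᵐ a ∂μ, |f a| ≤ g a) (hg : Integrable (fun a => g a ^ 2) μ) :
    (∫ a in s, f a ∂μ) ^ 2 ≤ (∫ a, g a ^ 2 ∂μ) * μ.real s := by
  have hg_nonneg : 0 ≤ ∫ a, g a ^ 2 ∂μ := integral_nonneg fun a => sq_nonneg (g a)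
  by_cases hf : Integrable f (μ.restrict s)
  swap
  · rw [integral_undef hf, sq, zero_mul]
    exact mul_nonneg hg_nonneg measureReal_nonneg
  have : IsFiniteMeasure (μ.restrict s) := isFiniteMeasure_restrict.mpr hs
  have hsq_le : ∀ᵐ a ∂μ, f a ^ 2 ≤ g a ^ 2 := hfg.mono fun a ha => by
    simpa only [sq_abs] using pow_le_pow_left₀ (abs_nonneg (f a)) ha 2
  have hf_sq : Integrable (fun a => f a ^ 2) (μ.restrict s) :=
    hg.restrict.mono (hf.aestronglyMeasurable.pow 2) <| ae_restrict_of_ae <| hsq_le.mono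
      fun a ha => by simpa only [Real.norm_of_nonneg (sq_nonneg _)] using ha
  calc (∫ a in s, f a ∂μ) ^ 2 ≤ (∫ a in s, f a ^ 2 ∂μ) * μ.real s := by
        simpa only [measureReal_restrict_apply_univ] using
          sq_integral_le_integral_sq_mul_measureReal_univ
            ((memLp_two_iff_integrable_sq hf.aestronglyMeasurable).mpr hf_sq)
    _ ≤ (∫ a in s, g a ^ 2 ∂μ) * μ.real s := mul_le_mul_of_nonneg_right
        (integral_mono_ae hf_sq hg.restrict (ae_restrict_of_ae hsq_le)) measureReal_nonneg
    _ ≤ (∫ a, g a ^ 2 ∂μ) * μ.real s := mul_le_mul_of_nonneg_right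
        (setIntegral_le_integral hg (.of_forall fun a => sq_nonneg (g a))) measureReal_nonneg

end CauchySchwarz

theorem on_diagonal_lower_from_survival_general (μ : Measure ℝ)
    (p pD : ℝ → ℝ → ℝ → ℝ) (x R t : ℝ)
    (hCK : p (2 * t) x x = ∫ z, (p t x z) ^ 2 ∂μ)
    (hL2 : Integrable (fun z => (p t x z) ^ 2) μ)
    (hpDnn : ∀ z, 0 ≤ pD t x z)
    (hpDle : ∀ z, pD t x z ≤ p t x z)
    (q : ℝ) (hq : q = ∫ z in Ioo (x - R) (x + R), pD t x z ∂μ) :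
    q ^ 2 / (μ (Ioo (x - R) (x + R))).toReal ≤ p (2 * t) x x := by
  have hp_sq_nonneg : 0 ≤ ∫ z, p t x z ^ 2 ∂μ := integral_nonneg fun z => sq_nonneg _
  rw [hCK]
  by_cases hball : μ (Ioo (x - R) (x + R)) = ⊤
  · simpa [hball] using hp_sq_nonneg
  refine div_le_of_le_mul₀ ENNReal.toReal_nonneg hp_sq_nonneg ?_
  rw [hq]
  exact sq_setIntegral_le_integral_sq_mul_measureReal hball
    (.of_forall fun z => (abs_of_nonneg (hpDnn z)).trans_le (hpDle z)) hL2

/-- On-diagonal lower bound from survival probability: if `p` is a symmetric heat kernel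
with respect to `μ` satisfying Chapman–Kolmogorov, and the Dirichlet heat kernel `pD` of
the ball `B(x,R)` satisfies `0 ≤ pD ≤ p` with survival probability
`P^x(τ_{B(x,R)} > t) = ∫_{B(x,R)} pD(t,x,z) μ(dz)`, then
`p(2t,x,x) ≥ P^x(τ_{B(x,R)} > t)² / μ(B(x,R))`. -/
theorem on_diagonal_lower_from_survival (μ : Measure ℝ)
    (p pD : ℝ → ℝ → ℝ → ℝ) (x R t : ℝ) (hR : 0 < R) (ht : 0 < t)
    (hsymm : ∀ s y z, p s y z = p s z y)
    (hCK : p (2 * t) x x = ∫ z, (p t x z) ^ 2 ∂μ)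
    (hL2 : Integrable (fun z => (p t x z) ^ 2) μ)
    (hpDnn : ∀ z, 0 ≤ pD t x z)
    (hpDle : ∀ z, pD t x z ≤ p t x z)
    (q : ℝ) (hq : q = ∫ z in Ioo (x - R) (x + R), pD t x z ∂μ) :
    q ^ 2 / (μ (Ioo (x - R) (x + R))).toReal ≤ p (2 * t) x x :=
  on_diagonal_lower_from_survival_general μ p pD x R t hCK hL2 hpDnn hpDle q hq
end

section
/- Let ψ : (0,∞) → (0,∞) be continuous, non-increasing, and differentiable, and let F : (0,∞) → (0,∞) be continuous and non-increasing with lim_{r→∞} F(r) = 0. Suppose that for all t > 0 and r > 0, ψ'(t) ≤ (1/(2r))·(2 F(r) − ψ(t)²). Then lim_{t→∞} ψ(t) = 0. -/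
/-! If `ψ ≥ ε > 0` held throughout, one radius `r` with `2 F r < ε² / 2` would give
`ψ' ≤ -ε² / (4 r)` everywhere, so `ψ` would eventually become negative. Hence `ψ` takes
arbitrarily small values, and being non-increasing and positive it tends to `0`. -/

open Set Filter

theorem tendsto_atBot_of_hasDerivAt_le_neg {f f' : ℝ → ℝ} {a c : ℝ} (hc : 0 < c)
    (hf : ∀ x, a < x → HasDerivAt f (f' x) x) (hf' : ∀ x, a < x → f' x ≤ -c) :
    Tendsto f atTop atBot := by
  have hdiff : DifferentiableOn ℝ f (Ioi a) := fun x hx =>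
    (hf x hx).differentiableAt.differentiableWithinAt
  have hslope : ∀ x, a + 1 ≤ x → f x - f (a + 1) ≤ -c * (x - (a + 1)) := fun x hx =>
    (convex_Ioi a).image_sub_le_mul_sub_of_deriv_le hdiff.continuousOn
      (by rwa [interior_Ioi]) (fun y hy => by
        rw [interior_Ioi] at hy
        exact (hf y hy).deriv ▸ hf' y hy)
      (a + 1) (by simp) x (by simp only [mem_Ioi]; linarith) hx
  have hline : Tendsto (fun x => f (a + 1) + -(c * (x - (a + 1)))) atTop atBot :=
    tendsto_atBot_add_const_left _ _ <| tendsto_neg_atTop_atBot.comp <|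
      (tendsto_id.atTop_add tendsto_const_nhds).const_mul_atTop hc
  refine tendsto_atBot_mono' atTop ?_ hline
  filter_upwards [eventually_ge_atTop (a + 1)] with x hx
  linarith [hslope x hx]

theorem psi_tendsto_zero_general (ψ ψ' F : ℝ → ℝ)
    (hψpos : ∀ t, 0 < t → 0 < ψ t)
    (hψmono : ∀ s t, 0 < s → s ≤ t → ψ t ≤ ψ s)
    (hψderiv : ∀ t, 0 < t → HasDerivAt ψ (ψ' t) t)
    (hFlim : Tendsto F atTop (nhds 0))
    (hineq : ∀ t r, 0 < t → 0 < r → ψ' t ≤ (1 / (2 * r)) * (2 * F r - (ψ t) ^ 2)) :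
    Tendsto ψ atTop (nhds 0) := by
  have hψ_eventually_pos : ∀ᶠ t in atTop, 0 < ψ t :=
    (eventually_gt_atTop 0).mono hψpos
  have hψ_small : ∀ ε, 0 < ε → ∃ T, 0 < T ∧ ψ T < ε := by
    intro ε hε
    by_contra! hψ_ge
    obtain ⟨r, hFr, hr⟩ :=
      ((hFlim.eventually (gt_mem_nhds (by positivity : (0 : ℝ) < ε ^ 2 / 4))).and
        (eventually_gt_atTop 0)).exists
    have hψ'_le : ∀ t, 0 < t → ψ' t ≤ -(ε ^ 2 / (4 * r)) := fun t ht => by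
      have hsq : ε ^ 2 ≤ ψ t ^ 2 := pow_le_pow_left₀ hε.le (hψ_ge t ht) 2
      calc ψ' t ≤ (1 / (2 * r)) * (2 * F r - ψ t ^ 2) := hineq t r ht hr
        _ ≤ (1 / (2 * r)) * (-(ε ^ 2 / 2)) := by gcongr; linarith
        _ = -(ε ^ 2 / (4 * r)) := by field_simp; ring
    have hψ_neg := (tendsto_atBot_of_hasDerivAt_le_neg (by positivity) hψderiv hψ'_le).eventually
      (eventually_lt_atBot 0)
    obtain ⟨t, hpos, hneg⟩ := (hψ_eventually_pos.and hψ_neg).exists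
    exact hpos.not_gt hneg
  refine tendsto_order.2
    ⟨fun a ha => hψ_eventually_pos.mono fun t ht => ha.trans ht, fun ε hε => ?_⟩
  obtain ⟨T, hT, hψT⟩ := hψ_small ε hε
  filter_upwards [eventually_ge_atTop T] with t ht using (hψmono T t hT ht).trans_lt hψT

/-- Abstract decay of the on-diagonal heat kernel: if `ψ` is positive, continuous,
non-increasing and differentiable on `(0,∞)`, `F` is positive, continuous,
non-increasing with `F(r) → 0` as `r → ∞`, and
`ψ'(t) ≤ (1/(2r))(2 F(r) - ψ(t)²)` for all `t, r > 0`, then `ψ(t) → 0` as `t → ∞`. -/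
theorem psi_tendsto_zero (ψ ψ' F : ℝ → ℝ)
    (hψpos : ∀ t, 0 < t → 0 < ψ t)
    (hψcont : ContinuousOn ψ (Ioi 0))
    (hψmono : ∀ s t, 0 < s → s ≤ t → ψ t ≤ ψ s)
    (hψderiv : ∀ t, 0 < t → HasDerivAt ψ (ψ' t) t)
    (hFpos : ∀ r, 0 < r → 0 < F r)
    (hFcont : ContinuousOn F (Ioi 0))
    (hFmono : ∀ r s, 0 < r → r ≤ s → F s ≤ F r)
    (hFlim : Tendsto F atTop (nhds 0))
    (hineq : ∀ t r, 0 < t → 0 < r → ψ' t ≤ (1 / (2 * r)) * (2 * F r - (ψ t) ^ 2)) :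
    Tendsto ψ atTop (nhds 0) :=
  psi_tendsto_zero_general ψ ψ' F hψpos hψmono hψderiv hFlim hineq
end
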